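/- arXiv:2206.05890 — 2 statements merged into one kernel-verified Lean document; each statement's English description precedes it below -/
import Mathlib

section
/- Let q be a real number with q > 0 and q ≠ 1, let k ≥ 1 and x ≥ 1 be natural numbers, and let r_1, …, r_k ≥ 1 be natural numbers. Then the q-multinomial coefficient satisfies the recurrence C_q(x; r_1,…,r_k) = q^{s_k} · C_q(x−1; r_1,…,r_k) + Σ_{j=1}^{k} q^{s_{j−1}} · C_q(x−1; r_1,…,r_{j−1}, r_j−1, r_{j+1},…,r_k), where s_j = r_1 + ⋯ + r_j and s_0 = 0. -/
noncomputable def qNum (q : ℝ) (m : ℤ) : ℝ := (1 - q ^ m) / (1 - q)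

noncomputable def qFactorial (q : ℝ) (n : ℕ) : ℝ :=
  ∏ i ∈ Finset.range n, qNum q ((i : ℤ) + 1)

noncomputable def qFacOrd (q : ℝ) (x : ℤ) (r : ℕ) : ℝ :=
  ∏ i ∈ Finset.range r, qNum q (x - (i : ℤ))

noncomputable def qMultinomial (q : ℝ) (x : ℤ) {k : ℕ} (r : Fin k → ℕ) : ℝ :=
  qFacOrd q x (∑ j, r j) / ∏ j, qFactorial q (r j)

/-! Put `s = ∑ r_j = t + 1` and `P = [x-1]_{t,q}`. Then `C_q(x; r)`, `C_q(x-1; r)` and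
`C_q(x-1; r with r_j - 1)` are `[x]_q`, `[x-s]_q` and `[r_j]_q` times `P / ∏ [r_j]_q!`, so the
recurrence reduces to `[x]_q = q^s [x-s]_q + ∑_j q^{s_{j-1}} [r_j]_q`. Multiplied by `1 - q` this
is the telescoping sum `1 - q^s = ∑_j q^{s_{j-1}} (1 - q^{r_j})`. -/

theorem one_sub_pow_sum_eq_sum {R ι : Type*} [CommRing R] [Fintype ι] [LinearOrder ι]
    (q : R) (r : ι → ℕ) :
    1 - q ^ (∑ i, r i) =
      ∑ j, q ^ (∑ i ∈ Finset.univ.filter (fun i => i < j), r i) * (1 - q ^ r j) := by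
  have h := Finset.prod_one_sub_ordered Finset.univ (fun i => 1 - q ^ r i)
  simp only [sub_sub_cancel, Finset.prod_pow_eq_pow_sum] at h
  rw [h, sub_sub_cancel]
  exact Finset.sum_congr rfl fun j _ => mul_comm _ _

theorem qNum_ne_zero {q : ℝ} (hq : 0 < q) (hq1 : q ≠ 1) {m : ℤ} (hm : m ≠ 0) :
    qNum q m ≠ 0 := by
  refine div_ne_zero (sub_ne_zero.mpr fun h => hm ?_) (sub_ne_zero.mpr hq1.symm)
  exact zpow_right_injective₀ hq hq1 (h.symm.trans (zpow_zero q).symm)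

theorem qNum_eq_pow_sum_mul_add_sum {q : ℝ} (hq : q ≠ 0) (x : ℤ) {ι : Type*} [Fintype ι]
    [LinearOrder ι] (r : ι → ℕ) :
    qNum q x = q ^ (∑ i, r i) * qNum q (x - (∑ i, r i : ℕ)) +
      ∑ j, q ^ (∑ i ∈ Finset.univ.filter (fun i => i < j), r i) * qNum q (r j) := by
  have hsplit : q ^ (∑ i, r i) * q ^ (x - (∑ i, r i : ℕ)) = q ^ x := by
    rw [← zpow_natCast, ← zpow_add₀ hq, add_sub_cancel]
  have key : 1 - q ^ x = q ^ (∑ i, r i) * (1 - q ^ (x - (∑ i, r i : ℕ))) +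
      ∑ j, q ^ (∑ i ∈ Finset.univ.filter (fun i => i < j), r i) * (1 - q ^ r j) := by
    rw [← one_sub_pow_sum_eq_sum, mul_one_sub, hsplit]
    ring
  simp only [qNum, zpow_natCast, ← mul_div_assoc, ← Finset.sum_div, ← add_div, key]

theorem qFactorial_succ (q : ℝ) (n : ℕ) :
    qFactorial q (n + 1) = qFactorial q n * qNum q (n + 1) :=
  Finset.prod_range_succ _ n

theorem qFacOrd_succ (q : ℝ) (x : ℤ) (n : ℕ) :
    qFacOrd q x (n + 1) = qFacOrd q x n * qNum q (x - n) :=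
  Finset.prod_range_succ _ n

theorem qFacOrd_succ' (q : ℝ) (x : ℤ) (n : ℕ) :
    qFacOrd q x (n + 1) = qNum q x * qFacOrd q (x - 1) n := by
  rw [qFacOrd, Finset.prod_range_succ', mul_comm]
  congr 1
  · simp
  · exact Finset.prod_congr rfl fun i _ => by push_cast; ring_nf

theorem prod_qFactorial_update {ι : Type*} [Fintype ι] [DecidableEq ι] (q : ℝ) (r : ι → ℕ)
    (j : ι) (n : ℕ) :
    ∏ i, qFactorial q (Function.update r j n i) =
      qFactorial q n * ∏ i ∈ Finset.univ \ {j}, qFactorial q (r i) := by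
  simp_rw [Function.apply_update (fun _ => qFactorial q)]
  exact Finset.prod_update_of_mem (Finset.mem_univ j) _ _

theorem qMultinomial_update_sub_one {q : ℝ} (hq : 0 < q) (hq1 : q ≠ 1) (x : ℤ) {k : ℕ}
    (r : Fin k → ℕ) {j : Fin k} (hj : 1 ≤ r j) :
    qMultinomial q x (Function.update r j (r j - 1)) =
      qNum q (r j) * qFacOrd q x (∑ i, r i - 1) / ∏ i, qFactorial q (r i) := by
  obtain ⟨n, hn⟩ : ∃ n, r j = n + 1 := Nat.exists_eq_add_one.mpr hj
  have hsum : ∑ i, Function.update r j (r j - 1) i = ∑ i, r i - 1 := by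
    rw [Finset.sum_update_of_mem (Finset.mem_univ j),
      Finset.sum_eq_add_sum_sdiff_singleton_of_mem (Finset.mem_univ j)]
    omega
  have hprod : ∏ i, qFactorial q (r i) =
      qNum q (r j) * ∏ i, qFactorial q (Function.update r j (r j - 1) i) := by
    conv_lhs => rw [← Function.update_eq_self j r]
    rw [prod_qFactorial_update, prod_qFactorial_update, hn, qFactorial_succ]
    push_cast
    ring
  rw [qMultinomial, hsum, hprod, mul_div_mul_left _ _ (qNum_ne_zero hq hq1 (by omega))]

theorem qMultinomial_recurrence'_general (q : ℝ) (hq : 0 < q) (hq1 : q ≠ 1)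
    (k x : ℕ) (r : Fin k → ℕ) (hr : ∀ j, 1 ≤ r j) :
    qMultinomial q (x : ℤ) r =
      q ^ (∑ i, r i) * qMultinomial q ((x : ℤ) - 1) r +
      ∑ j : Fin k,
        q ^ (∑ i ∈ Finset.univ.filter (fun i => i < j), r i) *
          qMultinomial q ((x : ℤ) - 1) (Function.update r j (r j - 1)) := by
  rcases Nat.eq_zero_or_pos k with rfl | hk
  · simp [qMultinomial, qFacOrd]
  obtain ⟨t, ht⟩ : ∃ t, ∑ i, r i = t + 1 :=
    Nat.exists_eq_add_one.mpr ((hr ⟨0, hk⟩).trans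
      (Finset.single_le_sum (fun _ _ => Nat.zero_le _) (Finset.mem_univ _)))
  set P := qFacOrd q ((x : ℤ) - 1) t
  set D := ∏ i, qFactorial q (r i)
  have hC : qMultinomial q x r = qNum q x * P / D := by
    rw [qMultinomial, ht, qFacOrd_succ']
  have hC₁ : qMultinomial q (x - 1) r = qNum q (x - (∑ i, r i : ℕ)) * P / D := by
    rw [qMultinomial, ht, qFacOrd_succ, mul_comm, Nat.cast_succ, sub_sub, add_comm]
  have hupd : ∀ j, qMultinomial q (x - 1) (Function.update r j (r j - 1)) =
      qNum q (r j) * P / D := fun j => by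
    rw [qMultinomial_update_sub_one hq hq1 _ r (hr j), ht, Nat.add_sub_cancel]
  rw [hC, hC₁, qNum_eq_pow_sum_mul_add_sum hq.ne' x r, add_mul, add_div, Finset.sum_mul,
    Finset.sum_div]
  simp only [hupd, mul_assoc, mul_div_assoc]

/-- Alternative q-multinomial recurrence:
    C_q(x; r) = q^(s_k) C_q(x−1; r) + Σ_j q^(s_{j−1}) C_q(x−1; r with r_j−1),
    s_j = r_1 + ⋯ + r_j, s_0 = 0. -/
theorem qMultinomial_recurrence' (q : ℝ) (hq : 0 < q) (hq1 : q ≠ 1)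
    (k x : ℕ) (hk : 1 ≤ k) (hx : 1 ≤ x) (r : Fin k → ℕ) (hr : ∀ j, 1 ≤ r j) :
    qMultinomial q (x : ℤ) r =
      q ^ (∑ i, r i) * qMultinomial q ((x : ℤ) - 1) r +
      ∑ j : Fin k,
        q ^ (∑ i ∈ Finset.univ.filter (fun i => i < j), r i) *
          qMultinomial q ((x : ℤ) - 1) (Function.update r j (r j - 1)) :=
  qMultinomial_recurrence'_general q hq hq1 k x r hr
end

section
/- Let q be a real number with q > 0 and q ≠ 1, let k ≥ 1 and n be natural numbers, and let x_1, …, x_k be real numbers. Then the q-multinomial formula holds: ∏_{j=1}^{k} ∏_{i=1}^{n} (1 + x_j q^{i−1}) = Σ C_q(n; r_1,…,r_k) · ∏_{j=1}^{k} [ x_j^{r_j} · q^{r_j(r_j−1)/2} · ∏_{i=1}^{s_{j−1}} (1 + x_j q^{n − s_{j−1} + i − 1}) ], where the sum is over all tuples (r_1,…,r_k) of natural numbers with r_1 + ⋯ + r_k ≤ n, and s_j = r_1 + ⋯ + r_j with s_0 = 0. -/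
/-!
Induction on the number of variables. The q-binomial theorem expands the first factor
`∏_{i<m} (1 + x₀ qⁱ)` as `∑_r [m, r]_q x₀ʳ q^(r(r-1)/2)`, where `[m, r]_q = qBinom q m r`. For each
`r`, every other factor splits as `∏_{i<m-r} (1 + xⱼ qⁱ) · ∏_{i<r} (1 + xⱼ q^(m-r+i))`, and the
induction hypothesis at `m - r` expands the product of the first parts. Composing these expansions
gives the summands of the formula, because the q-multinomial coefficient is the product
`∏ⱼ [n - s_{j-1}, rⱼ]_q` of q-binomial coefficients.
-/

open Finset

noncomputable def qBinom (q : ℝ) (m : ℤ) (r : ℕ) : ℝ := qFacOrd q m r / qFactorial q r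

lemma qNum_add {q : ℝ} (hq : q ≠ 0) (a b : ℤ) : qNum q (a + b) = q ^ b * qNum q a + qNum q b := by
  simp only [qNum, zpow_add₀ hq]
  ring

lemma qNum_natCast_ne_zero {q : ℝ} (hq : 0 < q) (hq1 : q ≠ 1) {m : ℕ} (hm : m ≠ 0) :
    qNum q m ≠ 0 := by
  have hpow : q ^ m ≠ 1 := fun h => hq1 ((pow_eq_one_iff_of_nonneg hq.le hm).mp h)
  rw [qNum, zpow_natCast]
  exact div_ne_zero (sub_ne_zero.mpr hpow.symm) (sub_ne_zero.mpr hq1.symm)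

lemma qFactorial_ne_zero {q : ℝ} (hq : 0 < q) (hq1 : q ≠ 1) (r : ℕ) : qFactorial q r ≠ 0 :=
  prod_ne_zero_iff.mpr fun i _ => by exact_mod_cast qNum_natCast_ne_zero hq hq1 i.succ_ne_zero

lemma qFacOrd_add (q : ℝ) (x : ℤ) (a b : ℕ) :
    qFacOrd q x (a + b) = qFacOrd q x a * qFacOrd q (x - a) b := by
  simp only [qFacOrd, prod_range_add, Nat.cast_add, sub_add_eq_sub_sub]

lemma qBinom_zero_right (q : ℝ) (x : ℤ) : qBinom q x 0 = 1 := by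
  simp [qBinom, qFacOrd, qFactorial]

lemma qBinom_eq_zero_of_lt (q : ℝ) {m r : ℕ} (h : m < r) : qBinom q m r = 0 := by
  rw [qBinom, qFacOrd, prod_eq_zero (mem_range.mpr h) (by simp [qNum]), zero_div]

lemma qBinom_succ_succ {q : ℝ} (hq : 0 < q) (hq1 : q ≠ 1) (x : ℤ) (r : ℕ) :
    qBinom q (x + 1) (r + 1) = q ^ (r + 1) * qBinom q x (r + 1) + qBinom q x r := by
  have hsplit : qNum q (x + 1) = q ^ (r + 1) * qNum q (x - r) + qNum q (r + 1) := by
    rw [← zpow_natCast, Nat.cast_succ, ← qNum_add hq.ne']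
    congr 1
    ring
  have hfront : qFacOrd q (x + 1) (r + 1) = qNum q (x + 1) * qFacOrd q x r := by
    rw [add_comm r, qFacOrd_add]
    simp [qFacOrd]
  have hback : qFacOrd q x (r + 1) = qFacOrd q x r * qNum q (x - r) := prod_range_succ _ _
  have hfact : qFactorial q (r + 1) = qFactorial q r * qNum q (r + 1) := by
    simp [qFactorial, prod_range_succ]
  have hF := qFactorial_ne_zero hq hq1 r
  have hN : qNum q (r + 1) ≠ 0 := by exact_mod_cast qNum_natCast_ne_zero hq hq1 r.succ_ne_zero
  rw [qBinom, qBinom, qBinom, hfront, hback, hfact, hsplit]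
  field_simp

theorem prod_one_add_mul_pow_eq_sum_qBinom {q : ℝ} (hq : 0 < q) (hq1 : q ≠ 1) (m : ℕ) (x : ℝ) :
    ∏ i ∈ range m, (1 + x * q ^ i) =
      ∑ r ∈ range (m + 1), qBinom q m r * (x ^ r * q ^ (r * (r - 1) / 2)) := by
  induction m generalizing x with
  | zero => simp [qBinom_zero_right]
  | succ m ih =>
    set a : ℕ → ℝ := fun r => qBinom q m r * (x ^ r * q ^ (r * (r - 1) / 2 + r)) with ha
    have hshift : ∀ r, qBinom q m r * ((x * q) ^ r * q ^ (r * (r - 1) / 2)) = a r := fun r => by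
      simp only [ha, pow_add, mul_pow]
      ring
    have hpascal : ∀ r,
        qBinom q (m + 1 : ℕ) (r + 1) * (x ^ (r + 1) * q ^ ((r + 1) * (r + 1 - 1) / 2))
          = a (r + 1) + x * a r := fun r => by
      rw [Nat.cast_succ, qBinom_succ_succ hq hq1, Nat.triangle_succ]
      simp only [ha, Nat.triangle_succ]
      ring
    have hsum : ∑ r ∈ range (m + 1), a r = ∑ r ∈ range (m + 1), a (r + 1) + 1 := by
      have hlast : a (m + 1) = 0 := by simp [ha, qBinom_eq_zero_of_lt q m.lt_succ_self]
      rw [← add_zero (∑ r ∈ range (m + 1), a r), ← hlast, ← sum_range_succ, sum_range_succ']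
      simp [ha, qBinom_zero_right]
    calc ∏ i ∈ range (m + 1), (1 + x * q ^ i)
        = (1 + x) * ∏ i ∈ range m, (1 + (x * q) * q ^ i) := by
          rw [prod_range_succ', pow_zero, mul_one, mul_comm]
          exact congrArg _ (prod_congr rfl fun i _ => by ring)
      _ = ∑ r ∈ range (m + 1), (a (r + 1) + x * a r) + 1 := by
          rw [ih, sum_add_distrib, ← mul_sum]
          simp only [hshift, hsum]
          ring
      _ = ∑ r ∈ range (m + 1 + 1), qBinom q (m + 1 : ℕ) r * (x ^ r * q ^ (r * (r - 1) / 2)) := by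
          rw [sum_range_succ' _ (m + 1)]
          simp only [hpascal]
          simp [qBinom_zero_right]

def prefixSum {k : ℕ} (r : Fin k → ℕ) (j : Fin k) : ℕ :=
  ∑ i ∈ univ.filter (fun i => i < j), r i

lemma prefixSum_zero {k : ℕ} (r : Fin (k + 1) → ℕ) : prefixSum r 0 = 0 := by
  simp [prefixSum]

lemma prefixSum_succ {k : ℕ} (r : Fin (k + 1) → ℕ) (j : Fin k) :
    prefixSum r j.succ = r 0 + prefixSum (fun i => r i.succ) j := by
  simp [prefixSum, sum_filter, Fin.sum_univ_succ, Fin.succ_pos]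

lemma prefixSum_le_sum {k : ℕ} (r : Fin k → ℕ) (j : Fin k) : prefixSum r j ≤ ∑ i, r i :=
  sum_le_sum_of_subset (filter_subset _ _)

lemma qFacOrd_sum_eq_prod {q : ℝ} {k : ℕ} (x : ℤ) (r : Fin k → ℕ) :
    qFacOrd q x (∑ j, r j) = ∏ j, qFacOrd q (x - prefixSum r j) (r j) := by
  induction k generalizing x with
  | zero => simp [qFacOrd]
  | succ k ih =>
    rw [Fin.sum_univ_succ, qFacOrd_add, ih, Fin.prod_univ_succ, prefixSum_zero]
    simp only [prefixSum_succ, Nat.cast_add, sub_add_eq_sub_sub, Nat.cast_zero, sub_zero]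

lemma qMultinomial_eq_prod_qBinom (q : ℝ) {k : ℕ} (x : ℤ) (r : Fin k → ℕ) :
    qMultinomial q x r = ∏ j, qBinom q (x - prefixSum r j) (r j) := by
  rw [qMultinomial, qFacOrd_sum_eq_prod, ← prod_div_distrib]
  rfl

/-- The `j`-th factor of a summand of the formula, with `s = s_{j-1}`. -/
noncomputable def qMultinomialFactor (q : ℝ) (m : ℕ) (y : ℝ) (s r : ℕ) : ℝ :=
  qBinom q ((m : ℤ) - s) r *
    (y ^ r * q ^ (r * (r - 1) / 2) * ∏ i ∈ range s, (1 + y * q ^ (m - s + i)))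

lemma qMultinomialFactor_zero (q : ℝ) (m : ℕ) (y : ℝ) (r : ℕ) :
    qMultinomialFactor q m y 0 r = qBinom q m r * (y ^ r * q ^ (r * (r - 1) / 2)) := by
  simp [qMultinomialFactor]

lemma qMultinomialFactor_add (q : ℝ) {m a s : ℕ} (h : a + s ≤ m) (y : ℝ) (r : ℕ) :
    qMultinomialFactor q m y (a + s) r =
      qMultinomialFactor q (m - a) y s r * ∏ i ∈ range a, (1 + y * q ^ (m - a + i)) := by
  have htop : (m : ℤ) - (a + s : ℕ) = ((m - a : ℕ) : ℤ) - s := by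
    push_cast [Nat.cast_sub (by omega : a ≤ m)]
    ring
  have hlow : ∀ i, m - (s + a) + i = m - a - s + i := fun i => by omega
  have hhigh : ∀ i, m - (s + a) + (s + i) = m - a + i := fun i => by omega
  rw [qMultinomialFactor, qMultinomialFactor, htop, add_comm a s, prod_range_add]
  simp only [hhigh]
  simp only [hlow]
  ring

lemma sum_filter_sum_le_eq_sum_cons {M : Type*} [AddCommMonoid M] {k N m : ℕ}
    (f : (Fin (k + 1) → Fin (N + 1)) → M) :
    ∑ r ∈ univ.filter (fun r : Fin (k + 1) → Fin (N + 1) => ∑ j, (r j : ℕ) ≤ m), f r =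
      ∑ a ∈ univ.filter (fun a : Fin (N + 1) => (a : ℕ) ≤ m),
        ∑ r ∈ univ.filter (fun r : Fin k → Fin (N + 1) => ∑ j, (r j : ℕ) ≤ m - a),
          f (Fin.cons a r) := by
  rw [sum_filter, ← (Fin.consEquiv fun _ => Fin (N + 1)).sum_comp, Fintype.sum_prod_type,
    sum_filter]
  refine sum_congr rfl fun a _ => ?_
  rw [sum_filter]
  simp only [Fin.consEquiv_apply, Fin.sum_univ_succ, Fin.cons_zero, Fin.cons_succ]
  split_ifs with ha
  · exact sum_congr rfl fun r _ => if_congr (by omega) rfl rfl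
  · exact sum_eq_zero fun r _ => if_neg (by omega)

lemma sum_filter_le_eq_sum_range {M : Type*} [AddCommMonoid M] {N m : ℕ} (hm : m ≤ N) (g : ℕ → M) :
    ∑ a ∈ univ.filter (fun a : Fin (N + 1) => (a : ℕ) ≤ m), g a = ∑ r ∈ range (m + 1), g r := by
  rw [sum_filter, Fin.sum_univ_eq_sum_range (fun r => if r ≤ m then g r else 0), ← sum_filter]
  congr 1
  ext r
  simp only [mem_filter, mem_range]
  omega

/-- The indices range over `Fin (N + 1)` for a fixed `N ≥ m`, so that the induction can lower `m`
without changing the index type. -/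
theorem prod_prod_one_add_mul_pow_eq_sum {q : ℝ} (hq : 0 < q) (hq1 : q ≠ 1) {N : ℕ} {k : ℕ}
    (x : Fin k → ℝ) {m : ℕ} (hm : m ≤ N) :
    ∏ j, ∏ i ∈ range m, (1 + x j * q ^ i) =
      ∑ r ∈ univ.filter (fun r : Fin k → Fin (N + 1) => ∑ j, (r j : ℕ) ≤ m),
        ∏ j, qMultinomialFactor q m (x j) (prefixSum (fun j => (r j : ℕ)) j) (r j) := by
  induction k generalizing m with
  | zero => simp
  | succ k ih =>
    have hinner : ∀ a : Fin (N + 1), (a : ℕ) ≤ m →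
        ∑ r ∈ univ.filter (fun r : Fin k → Fin (N + 1) => ∑ j, (r j : ℕ) ≤ m - a),
          ∏ j : Fin k,
            qMultinomialFactor q m (x j.succ) (a + prefixSum (fun j => (r j : ℕ)) j) (r j) =
        ∏ j : Fin k, ∏ i ∈ range m, (1 + x j.succ * q ^ i) := by
      intro a ha
      calc _ = ∑ r ∈ univ.filter (fun r : Fin k → Fin (N + 1) => ∑ j, (r j : ℕ) ≤ m - a),
              (∏ j, qMultinomialFactor q (m - a) (x j.succ)
                (prefixSum (fun j => (r j : ℕ)) j) (r j)) *
                ∏ j : Fin k, ∏ i ∈ range a, (1 + x j.succ * q ^ (m - a + i)) := by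
            refine sum_congr rfl fun r hr => ?_
            rw [← prod_mul_distrib]
            refine prod_congr rfl fun j _ => qMultinomialFactor_add q ?_ _ _
            have := prefixSum_le_sum (fun j => (r j : ℕ)) j
            have := (mem_filter.mp hr).2
            omega
        _ = (∏ j : Fin k, ∏ i ∈ range (m - a), (1 + x j.succ * q ^ i)) *
              ∏ j : Fin k, ∏ i ∈ range a, (1 + x j.succ * q ^ (m - a + i)) := by
            rw [← sum_mul, ih _ (by omega)]
        _ = _ := by
            rw [← prod_mul_distrib]
            refine prod_congr rfl fun j _ => ?_
            rw [← prod_range_add, Nat.sub_add_cancel ha]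
    rw [sum_filter_sum_le_eq_sum_cons]
    simp only [Fin.prod_univ_succ, prefixSum_zero, prefixSum_succ, Fin.cons_zero, Fin.cons_succ,
      qMultinomialFactor_zero, ← mul_sum]
    rw [sum_congr rfl fun a ha => by rw [hinner a (mem_filter.mp ha).2], ← sum_mul,
      sum_filter_le_eq_sum_range hm (fun r => qBinom q m r * (x 0 ^ r * q ^ (r * (r - 1) / 2))),
      prod_one_add_mul_pow_eq_sum_qBinom hq hq1]

theorem qMultinomial_formula_general (q : ℝ) (hq : 0 < q) (hq1 : q ≠ 1)
    (k n : ℕ) (x : Fin k → ℝ) :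
    ∏ j : Fin k, ∏ i ∈ Finset.range n, (1 + x j * q ^ i) =
      ∑ r ∈ Finset.univ.filter (fun r : Fin k → Fin (n + 1) => ∑ j, (r j : ℕ) ≤ n),
        qMultinomial q (n : ℤ) (fun j => (r j : ℕ)) *
          ∏ j : Fin k,
            x j ^ (r j : ℕ) * q ^ ((r j : ℕ) * ((r j : ℕ) - 1) / 2) *
              ∏ i ∈ Finset.range (∑ i' ∈ Finset.univ.filter (fun i' => i' < j), (r i' : ℕ)),
                (1 + x j * q ^ (n - (∑ i' ∈ Finset.univ.filter (fun i' => i' < j), (r i' : ℕ)) + i)) := by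
  rw [prod_prod_one_add_mul_pow_eq_sum hq hq1 x le_rfl]
  refine sum_congr rfl fun r _ => ?_
  rw [qMultinomial_eq_prod_qBinom, ← prod_mul_distrib]
  rfl

/-- q-multinomial formula:
    ∏_j ∏_{i=1}^n (1 + x_j q^(i−1)) =
    Σ_{r, Σr_j ≤ n} C_q(n; r) ∏_j x_j^(r_j) q^(r_j(r_j−1)/2) ∏_{i=1}^{s_{j−1}} (1 + x_j q^(n−s_{j−1}+i−1)). -/
theorem qMultinomial_formula (q : ℝ) (hq : 0 < q) (hq1 : q ≠ 1)
    (k n : ℕ) (hk : 1 ≤ k) (x : Fin k → ℝ) :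
    ∏ j : Fin k, ∏ i ∈ Finset.range n, (1 + x j * q ^ i) =
      ∑ r ∈ Finset.univ.filter (fun r : Fin k → Fin (n + 1) => ∑ j, (r j : ℕ) ≤ n),
        qMultinomial q (n : ℤ) (fun j => (r j : ℕ)) *
          ∏ j : Fin k,
            x j ^ (r j : ℕ) * q ^ ((r j : ℕ) * ((r j : ℕ) - 1) / 2) *
              ∏ i ∈ Finset.range (∑ i' ∈ Finset.univ.filter (fun i' => i' < j), (r i' : ℕ)),
                (1 + x j * q ^ (n - (∑ i' ∈ Finset.univ.filter (fun i' => i' < j), (r i' : ℕ)) + i)) :=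
  qMultinomial_formula_general q hq hq1 k n x
end
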